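/- arXiv:1108.6189 — 3 statements merged into one kernel-verified Lean document; each statement's English description precedes it below -/
import Mathlib

section
/- In an abstract rank one group X with abelian unipotent subgroups A and B, for each nontrivial a in A the element b in B satisfying A^b = B^a is uniquely determined. -/
/-- Conjugate `S ^ g = g⁻¹ S g` of a subgroup. -/
def conjSub {X : Type*} [Group X] (S : Subgroup X) (g : X) : Subgroup X :=
  S.map ((MulAut.conj g⁻¹).toMonoidHom)

/-!
If `A ^ b = B ^ a = A ^ b'`, then `b * b'⁻¹ ∈ B` normalizes `A`. Were it nontrivial, some
`a' ∈ A` would give `B ^ a' = A ^ (b * b'⁻¹) = A`, hence `B = A ^ a'⁻¹ = A`, contradicting `A ≠ B`.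
-/

section conjSub

variable {X : Type*} [Group X] {S T : Subgroup X} {g g' : X}

lemma mem_conjSub {x : X} : x ∈ conjSub S g ↔ g * x * g⁻¹ ∈ S := by
  constructor
  · rintro ⟨s, hs, rfl⟩
    simpa [mul_assoc] using hs
  · intro hx
    refine ⟨g * x * g⁻¹, hx, ?_⟩
    show g⁻¹ * (g * x * g⁻¹) * g⁻¹⁻¹ = x
    group

lemma conjSub_one : conjSub S 1 = S := by
  ext x
  simp [mem_conjSub]

lemma conjSub_conjSub (g h : X) : conjSub (conjSub S g) h = conjSub S (g * h) := by
  ext x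
  simp only [mem_conjSub, mul_inv_rev, mul_assoc]

lemma conjSub_eq_self_iff : conjSub S g = S ↔ g ∈ Subgroup.normalizer S := by
  rw [SetLike.ext_iff, Subgroup.mem_normalizer_iff]
  simp only [mem_conjSub]
  exact forall_congr' fun _ => iff_comm

lemma conjSub_eq_conjSub_iff :
    conjSub S g = conjSub S g' ↔ g * g'⁻¹ ∈ Subgroup.normalizer S := by
  rw [← conjSub_eq_self_iff]
  constructor
  · intro h
    rw [← conjSub_conjSub, h, conjSub_conjSub, mul_inv_cancel, conjSub_one]
  · intro h
    calc conjSub S g = conjSub (conjSub S (g * g'⁻¹)) g' := by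
          rw [conjSub_conjSub, inv_mul_cancel_right]
      _ = conjSub S g' := by rw [h]

lemma eq_of_conjSub_eq_conjSub_of_mem_normalizer (hg : g ∈ Subgroup.normalizer S)
    (hg' : g' ∈ Subgroup.normalizer S) (h : conjSub T g = conjSub S g') : T = S :=
  calc T = conjSub (conjSub T g) g⁻¹ := by rw [conjSub_conjSub, mul_inv_cancel, conjSub_one]
    _ = conjSub S (g' * g⁻¹) := by rw [h, conjSub_conjSub]
    _ = S := conjSub_eq_self_iff.mpr (mul_mem hg' (inv_mem hg))

end conjSub

theorem stmt0_general
    {X : Type*} [Group X] (A B : Subgroup X) (hAB : A ≠ B)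
    (hba : ∀ b ∈ B, b ≠ 1 → ∃ a ∈ A, a ≠ 1 ∧ conjSub B a = conjSub A b)
    (a : X)
    (b b' : X) (hb : b ∈ B) (hb' : b' ∈ B)
    (h : conjSub A b = conjSub B a) (h' : conjSub A b' = conjSub B a) :
    b = b' := by
  have hnorm : b * b'⁻¹ ∈ Subgroup.normalizer A := conjSub_eq_conjSub_iff.mp (h.trans h'.symm)
  by_contra hne
  obtain ⟨a', ha', -, hBa'⟩ :=
    hba (b * b'⁻¹) (B.mul_mem hb (B.inv_mem hb')) fun h1 => hne (mul_inv_eq_one.mp h1)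
  exact hAB
    (eq_of_conjSub_eq_conjSub_of_mem_normalizer (Subgroup.le_normalizer ha') hnorm hBa').symm

theorem stmt0
    {X : Type*} [Group X] (A B : Subgroup X) (hAB : A ≠ B)
    (hAcomm : IsMulCommutative A) (hBcomm : IsMulCommutative B)
    (hgen : A ⊔ B = ⊤)
    (hab : ∀ a ∈ A, a ≠ 1 → ∃ b ∈ B, b ≠ 1 ∧ conjSub A b = conjSub B a)
    (hba : ∀ b ∈ B, b ≠ 1 → ∃ a ∈ A, a ≠ 1 ∧ conjSub B a = conjSub A b)
    (a : X) (ha : a ∈ A) (ha1 : a ≠ 1)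
    (b b' : X) (hb : b ∈ B) (hb1 : b ≠ 1) (hb' : b' ∈ B) (hb'1 : b' ≠ 1)
    (h : conjSub A b = conjSub B a) (h' : conjSub A b' = conjSub B a) :
    b = b' :=
  stmt0_general A B hAB hba a b b' hb hb' h h'
end

section
/- In a special abstract rank one group X with abelian unipotent subgroups A and B, for all nontrivial a₁, a₂ in A: B^{a₁ a₂ n(a₂⁻¹) a₂} = B^{a₂ a₁ n(a₁⁻¹) a₁}. -/
lemma conjSub_mul {X : Type*} [Group X] (S : Subgroup X) (g h : X) :
    conjSub S (g * h) = conjSub (conjSub S g) h := by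
  simp only [conjSub, Subgroup.map_map, mul_inv_rev, map_mul]
  rfl

lemma conjSub_mul_eq_of_commute {X : Type*} [Group X] {A B : Subgroup X} {a₁ a₂ b₁ b₂ : X}
    (h₁ : conjSub A b₁ = conjSub B a₁) (h₂ : conjSub A b₂ = conjSub B a₂)
    (hb : Commute b₁ b₂) :
    conjSub B (a₁ * b₂) = conjSub B (a₂ * b₁) := by
  rw [conjSub_mul, conjSub_mul, ← h₁, ← h₂, ← conjSub_mul, ← conjSub_mul, hb.eq]

theorem stmt4_general
    {X : Type*} [Group X] (A B : Subgroup X)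
    (hBcomm : IsMulCommutative B)
    (bf : X → X)
    (hbf : ∀ a ∈ A, a ≠ 1 → bf a ∈ B ∧ bf a ≠ 1 ∧ conjSub A (bf a) = conjSub B a)
    (hspecial : ∀ a ∈ A, a ≠ 1 → bf a⁻¹ = (bf a)⁻¹)
    (a₁ a₂ : X) (ha₁ : a₁ ∈ A) (ha₁1 : a₁ ≠ 1) (ha₂ : a₂ ∈ A) (ha₂1 : a₂ ≠ 1) :
    conjSub B (a₁ * a₂ * (a₂⁻¹ * (bf a₂⁻¹)⁻¹ * a₂⁻¹) * a₂)
      = conjSub B (a₂ * a₁ * (a₁⁻¹ * (bf a₁⁻¹)⁻¹ * a₁⁻¹) * a₁) := by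
  have collapse : ∀ a ∈ A, a ≠ 1 → ∀ c : X,
      c * a * (a⁻¹ * (bf a⁻¹)⁻¹ * a⁻¹) * a = c * bf a := by
    intro a ha ha1 c
    rw [hspecial a ha ha1, inv_inv]
    group
  rw [collapse a₂ ha₂ ha₂1, collapse a₁ ha₁ ha₁1]
  exact conjSub_mul_eq_of_commute (hbf a₁ ha₁ ha₁1).2.2 (hbf a₂ ha₂ ha₂1).2.2
    (setLike_mul_comm (hbf a₁ ha₁ ha₁1).1 (hbf a₂ ha₂ ha₂1).1)

theorem stmt4
    {X : Type*} [Group X] (A B : Subgroup X) (hAB : A ≠ B)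
    (hAcomm : IsMulCommutative A) (hBcomm : IsMulCommutative B)
    (hgen : A ⊔ B = ⊤)
    (hab : ∀ a ∈ A, a ≠ 1 → ∃ b ∈ B, b ≠ 1 ∧ conjSub A b = conjSub B a)
    (hba : ∀ b ∈ B, b ≠ 1 → ∃ a ∈ A, a ≠ 1 ∧ conjSub B a = conjSub A b)
    (bf : X → X)
    (hbf : ∀ a ∈ A, a ≠ 1 → bf a ∈ B ∧ bf a ≠ 1 ∧ conjSub A (bf a) = conjSub B a)
    (hbfu : ∀ a ∈ A, a ≠ 1 → ∀ b ∈ B, b ≠ 1 → conjSub A b = conjSub B a → b = bf a)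
    (hspecial : ∀ a ∈ A, a ≠ 1 → bf a⁻¹ = (bf a)⁻¹)
    (a₁ a₂ : X) (ha₁ : a₁ ∈ A) (ha₁1 : a₁ ≠ 1) (ha₂ : a₂ ∈ A) (ha₂1 : a₂ ≠ 1) :
    conjSub B (a₁ * a₂ * (a₂⁻¹ * (bf a₂⁻¹)⁻¹ * a₂⁻¹) * a₂)
      = conjSub B (a₂ * a₁ * (a₁⁻¹ * (bf a₁⁻¹)⁻¹ * a₁⁻¹) * a₁) :=
  stmt4_general A B hBcomm bf hbf hspecial a₁ a₂ ha₁ ha₁1 ha₂ ha₂1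
end

section
/- In an abstract rank one group X with abelian unipotent subgroups A and B, the normalizer-in-A of B is trivial: N_A(B) = 1. -/
section
variable {X : Type*} [Group X]

lemma conjSub_eq_self_of_mem {S : Subgroup X} {g : X} (hg : g ∈ S) : conjSub S g = S :=
  Subgroup.conj_smul_eq_self_of_mem (S.inv_mem hg)

lemma conjSub_left_injective (g : X) : Function.Injective (conjSub · g) :=
  Subgroup.map_injective (MulAut.conj g⁻¹).injective

end

theorem stmt5_general
    {X : Type*} [Group X] (A B : Subgroup X) (hAB : A ≠ B)
    (hab : ∀ a ∈ A, a ≠ 1 → ∃ b ∈ B, b ≠ 1 ∧ conjSub A b = conjSub B a)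
    (a : X) (ha : a ∈ A) (h : conjSub B a = B) :
    a = 1 := by
  by_contra ha1
  obtain ⟨b, hb, -, hAb⟩ := hab a ha ha1
  have hA_conj_eq_B_conj : conjSub A b = conjSub B b := by
    rw [hAb, h, conjSub_eq_self_of_mem hb]
  exact hAB (conjSub_left_injective b hA_conj_eq_B_conj)

theorem stmt5
    {X : Type*} [Group X] (A B : Subgroup X) (hAB : A ≠ B)
    (hAcomm : IsMulCommutative A) (hBcomm : IsMulCommutative B)
    (hgen : A ⊔ B = ⊤)
    (hab : ∀ a ∈ A, a ≠ 1 → ∃ b ∈ B, b ≠ 1 ∧ conjSub A b = conjSub B a)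
    (hba : ∀ b ∈ B, b ≠ 1 → ∃ a ∈ A, a ≠ 1 ∧ conjSub B a = conjSub A b)
    (a : X) (ha : a ∈ A) (h : conjSub B a = B) :
    a = 1 :=
  stmt5_general A B hAB hab a ha h
end
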